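/- arXiv:1110.1067 — 2 statements merged into one kernel-verified Lean document; each statement's English description precedes it below -/
import Mathlib

section
/- Let m be a compactly supported function on ℝ⁺ of bounded r-variation for some 1 ≤ r < ∞. Then for each integer j ≥ 0 one can find a collection Υ_j of pairwise disjoint subintervals of ℝ⁺ and coefficients {b_υ}_{υ∈Υ_j} ⊂ ℝ such that |Υ_j| ≤ 2^j, |b_υ| ≤ ‖m‖_{V^r} 2^{−j/r} for every υ ∈ Υ_j, and m = Σ_{j≥0} Σ_{υ∈Υ_j} b_υ 1_υ, where the sum in j converges uniformly on ℝ⁺. -/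
open MeasureTheory Set Filter
open scoped ENNReal NNReal Classical BigOperators RealInnerProductSpace

noncomputable section

/-- The binary digit of `x` in position `n+1` to the left of the point
(terminating expansion for dyadic rationals). -/
def digit (n : ℤ) (x : ℝ) : ℤ := ⌊x / 2 ^ n⌋ % 2

/-- Bitwise addition `⊕` on nonnegative reals. -/
def wXor (x y : ℝ) : ℝ := ∑' n : ℤ, (((digit n x + digit n y) % 2 : ℤ) : ℝ) * 2 ^ n

/-- The `n`-th digit of the bitwise product `x ⊗ y`. -/
def wMulDigit (n : ℤ) (x y : ℝ) : ℤ :=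
  ⌊∑' m : ℤ, ((digit (n - m) x * digit m y : ℤ) : ℝ)⌋ % 2

/-- Bitwise multiplication `⊗` on nonnegative reals. -/
def wMul (x y : ℝ) : ℝ := ∑' n : ℤ, ((wMulDigit n x y : ℤ) : ℝ) * 2 ^ n

/-- The Walsh character `e(x) = exp (i π d₋₁(x))`. -/
def walshe (x : ℝ) : ℝ := (-1 : ℝ) ^ (digit (-1) x)

/-- The Walsh–Fourier transform on `ℝ⁺`; it is involutive, so it also serves
as the inverse Walsh–Fourier transform `ˇ`. -/
def walshFT (f : ℝ → ℝ) (ξ : ℝ) : ℝ := ∫ x in Set.Ici (0 : ℝ), walshe (wMul ξ x) * f x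

/-- Lebesgue measure on `ℝ⁺`. -/
def μplus : Measure ℝ := volume.restrict (Set.Ici 0)

/-- `L^p` norm (real exponent `p`) of an `ℝ≥0∞`-valued function. -/
def lpNormE (p : ℝ) (μ : Measure ℝ) (F : ℝ → ℝ≥0∞) : ℝ≥0∞ := (∫⁻ x, F x ^ p ∂μ) ^ (1 / p)

/-- The `r`-variation norm of `m` on the domain `D`. -/
def vnorm {ι E : Type*} [LinearOrder ι] [NormedAddCommGroup E] (r : ℝ) (D : Set ι)
    (m : ι → E) : ℝ≥0∞ :=
  (⨆ ξ ∈ D, (‖m ξ‖₊ : ℝ≥0∞)) +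
    ⨆ (N : ℕ) (u : Fin (N + 1) → ι) (_ : StrictMono u) (_ : ∀ i, u i ∈ D),
      (∑ i : Fin N, (‖m (u i.succ) - m (u i.castSucc)‖₊ : ℝ≥0∞) ^ r) ^ (1 / r)

/-- The Walsh `L^q`-multiplier norm. -/
def Mq (q : ℝ) (m : ℝ → ℝ) : ℝ≥0∞ :=
  ⨆ (g : ℝ → ℝ) (_ : eLpNorm g (ENNReal.ofReal q) μplus = 1),
    eLpNorm (walshFT fun ξ => m ξ * walshFT g ξ) (ENNReal.ofReal q) μplus

/-- The Walsh `L^q`-maximal-multiplier norm of a sequence of multipliers. -/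
def Mqstar (q : ℝ) (m : ℤ → ℝ → ℝ) : ℝ≥0∞ :=
  ⨆ (g : ℝ → ℝ) (_ : eLpNorm g (ENNReal.ofReal q) μplus = 1),
    lpNormE q μplus fun x => ⨆ k : ℤ, (‖walshFT (fun ξ => m k ξ * walshFT g ξ) x‖₊ : ℝ≥0∞)

/-- The `s`-variation `L^q`-multiplier norm of a sequence of multipliers. -/
def Mqs (q s : ℝ) (m : ℤ → ℝ → ℝ) : ℝ≥0∞ :=
  ⨆ (g : ℝ → ℝ) (_ : eLpNorm g (ENNReal.ofReal q) μplus = 1),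
    lpNormE q μplus fun x =>
      vnorm s (Set.univ : Set ℤ) fun k => walshFT (fun ξ => m k ξ * walshFT g ξ) x

/-- Dyadic intervals `[n 2^k, (n+1) 2^k)`. -/
def IsDyadic (I : Set ℝ) : Prop :=
  ∃ n k : ℤ, I = Set.Ico ((n : ℝ) * 2 ^ k) (((n : ℝ) + 1) * 2 ^ k)

/-- Dyadic intervals of length `2^k`. -/
def IsDyadicLen (k : ℤ) (ω : Set ℝ) : Prop :=
  ∃ n : ℤ, ω = Set.Ico ((n : ℝ) * 2 ^ k) (((n : ℝ) + 1) * 2 ^ k)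

/-- The lower half of an interval. -/
def lowerHalf (ω : Set ℝ) : Set ℝ := ω ∩ Set.Iio ((sInf ω + sSup ω) / 2)

/-- The upper half of an interval. -/
def upperHalf (ω : Set ℝ) : Set ℝ := ω ∩ Set.Ici ((sInf ω + sSup ω) / 2)

/-- A bitile `I × ω ⊆ ℝ⁺ × ℝ⁺` : a rectangle of dyadic intervals of area `2`. -/
structure Bitile where
  I : Set ℝ
  ω : Set ℝ
  hI : IsDyadic I
  hω : IsDyadic ω
  hIsub : I ⊆ Set.Ici 0
  hωsub : ω ⊆ Set.Ici 0
  harea : volume I * volume ω = 2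

/-- The `L²`-normalized Walsh wave packet of the tile `I × ω`. -/
def wavePacket (I ω : Set ℝ) (x : ℝ) : ℝ :=
  Real.sqrt (volume I).toReal * walshFT (Set.indicator ω fun _ => (1 : ℝ)) (wXor x (sInf I))

/-- `⟨f, φ_{P_l}⟩`, the pairing of `f` with the wave packet of the lower tile of `P`. -/
def walshCoef (P : Bitile) (f : ℝ → ℝ) : ℝ :=
  ∫ y in Set.Ici (0 : ℝ), f y * wavePacket P.I (lowerHalf P.ω) y

/-- The partial order on bitiles. -/
def Bitile.le (P Q : Bitile) : Prop := P.I ⊆ Q.I ∧ Q.ω ⊆ P.ω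

/-- Convexity of a set of bitiles. -/
def ConvexBitiles (S : Set Bitile) : Prop :=
  ∀ P₁ P₂ P₃ : Bitile, P₁ ∈ S → P₃ ∈ S → Bitile.le P₁ P₂ → Bitile.le P₂ P₃ → P₂ ∈ S

/-- The truncated partial Walsh-sum operator attached to a collection `Ps` of bitiles. -/
def Sk (Ps : Set Bitile) (f : ℝ → ℝ) (k : ℤ) (ξ x : ℝ) : ℝ :=
  ∑ᶠ (P : Bitile) (_ : P ∈ Ps ∧ volume P.I < 2 ^ k),
    walshCoef P f * wavePacket P.I (lowerHalf P.ω) x *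
      Set.indicator (upperHalf P.ω) (fun _ => (1 : ℝ)) ξ

/-- The partial Walsh-sum operator `S[f](ξ,x) = (f̂ 1_{[0,ξ)})ˇ(x)`. -/
def Spartial (f : ℝ → ℝ) (ξ x : ℝ) : ℝ :=
  walshFT (fun η => Set.indicator (Set.Ico 0 ξ) (fun _ => (1 : ℝ)) η * walshFT f η) x

/-- A tree of bitiles with top data `(ξtop, Itop)`. -/
structure WTree where
  carrier : Set Bitile
  ξtop : ℝ
  Itop : Set ℝ

/-- The defining conditions of a tree. -/
def IsTree (T : WTree) : Prop :=
  IsDyadic T.Itop ∧ 0 ≤ T.ξtop ∧ ∀ P ∈ T.carrier, P.I ⊆ T.Itop ∧ T.ξtop ∈ P.ω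

/-- `u`-overlapping trees. -/
def UOverlapping (T : WTree) : Prop := ∀ P ∈ T.carrier, T.ξtop ∈ upperHalf P.ω

/-- `l`-overlapping trees. -/
def LOverlapping (T : WTree) : Prop := ∀ P ∈ T.carrier, T.ξtop ∈ lowerHalf P.ω

/-- `T` is td-maximal among the trees in `Cc` : maximal with respect to inclusion among
trees in `Cc` with the same top data. -/
def TdMaximalAmong (T : WTree) (Cc : Set WTree) : Prop :=
  T ∈ Cc ∧ ∀ T' ∈ Cc, T'.ξtop = T.ξtop → T'.Itop = T.Itop →
    T.carrier ⊆ T'.carrier → T'.carrier ⊆ T.carrier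

/-- Order on the lower tiles of two bitiles. -/
def lowerLE (P Q : Bitile) : Prop := P.I ⊆ Q.I ∧ lowerHalf Q.ω ⊆ lowerHalf P.ω

/-- Strict order on the lower tiles of two bitiles. -/
def lowerLT (P Q : Bitile) : Prop := lowerLE P Q ∧ ¬ lowerLE Q P

/-- `l`-convexity of a set of bitiles. -/
def LConvex (S : Set Bitile) : Prop :=
  ∀ P P' P'' : Bitile, P ∈ S → P'' ∈ S → lowerLT P P' → lowerLT P' P'' → P' ∈ S

/-- A properly-sorted collection of `l`-overlapping trees. -/
def ProperlySorted (Ts : Set WTree) : Prop :=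
  (∀ T ∈ Ts, IsTree T ∧ LOverlapping T ∧ LConvex T.carrier) ∧
  (∀ T ∈ Ts, ∀ T' ∈ Ts, T ≠ T' → T.carrier ∩ T'.carrier = ∅) ∧
  (∀ T ∈ Ts, ∀ P ∈ T.carrier, ∀ T' ∈ Ts, (T'.Itop ∩ P.I).Nonempty → T'.ξtop ∉ upperHalf P.ω)

/-- The multiplier `𝒟_k = Σ_{|ω| = 2^k, ω ∩ Ξ ≠ ∅} a_ω 1_ω`. -/
def Dk (a : Set ℝ → ℝ) (Ξ : Set ℝ) (k : ℤ) (ξ : ℝ) : ℝ :=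
  ∑ᶠ (ω : Set ℝ) (_ : IsDyadicLen k ω ∧ (ω ∩ Ξ).Nonempty),
    a ω * Set.indicator ω (fun _ => (1 : ℝ)) ξ

/-- The sequence `k ↦ Σ_{|ω| = 2^k} a_ω 1_ω(ξ)`. -/
def dyadicSum (a : Set ℝ → ℝ) (ξ : ℝ) (k : ℤ) : ℝ :=
  ∑ᶠ (ω : Set ℝ) (_ : IsDyadicLen k ω), a ω * Set.indicator ω (fun _ => (1 : ℝ)) ξ

/-- A tile `I × ω ⊆ ℝ⁺ × ℝ⁺` : a rectangle of dyadic intervals of area `1`. -/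
structure WTile where
  I : Set ℝ
  ω : Set ℝ
  hI : IsDyadic I
  hω : IsDyadic ω
  hIsub : I ⊆ Set.Ici 0
  hωsub : ω ⊆ Set.Ici 0
  harea : volume I * volume ω = 1

/-- The subset of the phase plane occupied by a tile. -/
def WTile.carrier (p : WTile) : Set (ℝ × ℝ) := p.I ×ˢ p.ω

/-- The phase-plane projection `Π_S` associated to a region `S` which can be written as a
finite disjoint union of tiles (it is independent of the chosen tiling). -/
def phaseProj (S : Set (ℝ × ℝ)) (f : ℝ → ℝ) : ℝ → ℝ :=
  if h : ∃ ps : Set WTile, ps.Finite ∧ ps.PairwiseDisjoint WTile.carrier ∧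
      (⋃ p ∈ ps, p.carrier) = S then
    fun x => ∑ᶠ p ∈ h.choose,
      (∫ y in Set.Ici (0 : ℝ), f y * wavePacket p.I p.ω y) * wavePacket p.I p.ω x
  else 0

/-- The region of the phase plane occupied by a tree. -/
def treeRegion (T : WTree) : Set (ℝ × ℝ) := ⋃ P ∈ T.carrier, P.I ×ˢ P.ω

/-- `size(Ps, f) = sup_{T ⊆ Ps convex tree} |I_T|^{-1/2} ‖Π_T f‖_{L²}`. -/
def size (Ps : Set Bitile) (f : ℝ → ℝ) : ℝ≥0∞ :=
  ⨆ (T : WTree) (_ : IsTree T ∧ ConvexBitiles T.carrier ∧ T.carrier ⊆ Ps),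
    (volume T.Itop ^ (1 / 2 : ℝ))⁻¹ * eLpNorm (phaseProj (treeRegion T) f) 2 μplus



private lemma aux_snoc_strictMono {N : ℕ} {u : Fin (N+1) → ℝ} (hu : StrictMono u) {y : ℝ}
    (hy : u (Fin.last N) < y) : StrictMono (Fin.snoc u y : Fin (N+2) → ℝ) := by
  intro i j hij
  rcases Fin.eq_castSucc_or_eq_last j with ⟨j', rfl⟩ | rfl
  · rcases Fin.eq_castSucc_or_eq_last i with ⟨i', rfl⟩ | rfl
    · rw [Fin.snoc_castSucc, Fin.snoc_castSucc]
      exact hu (Fin.castSucc_lt_castSucc_iff.mp hij)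
    · exact absurd (le_of_lt hij) (not_le.mpr (Fin.castSucc_lt_last j'))
  · rcases Fin.eq_castSucc_or_eq_last i with ⟨i', rfl⟩ | rfl
    · rw [Fin.snoc_last, Fin.snoc_castSucc]
      exact lt_of_le_of_lt (hu.monotone (Fin.le_last i')) hy
    · exact absurd hij (lt_irrefl _)

private lemma aux_snoc_sum (m : ℝ → ℝ) (r : ℝ) {N : ℕ} (u : Fin (N+1) → ℝ) (y : ℝ) :
    ∑ i : Fin (N+1), |m ((Fin.snoc u y : Fin (N+2) → ℝ) i.succ) -
        m ((Fin.snoc u y : Fin (N+2) → ℝ) i.castSucc)| ^ r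
      = (∑ i : Fin N, |m (u i.succ) - m (u i.castSucc)| ^ r)
        + |m y - m (u (Fin.last N))| ^ r := by
  rw [Fin.sum_univ_castSucc]
  congr 1
  · refine Finset.sum_congr rfl fun i _ => ?_
    rw [Fin.succ_castSucc, Fin.snoc_castSucc, Fin.snoc_castSucc]
  · rw [Fin.succ_last, Fin.snoc_last, Fin.snoc_castSucc]

private lemma aux_rpow_subadd {a b p : ℝ} (ha : 0 ≤ a) (hb : 0 ≤ b) (hp : 0 ≤ p) (hp1 : p ≤ 1) :
    (a + b) ^ p ≤ a ^ p + b ^ p := by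
  have h := NNReal.rpow_add_le_add_rpow a.toNNReal b.toNNReal hp hp1
  have := NNReal.coe_le_coe.mpr h
  push_cast [NNReal.coe_rpow] at this
  rwa [Real.coe_toNNReal a ha, Real.coe_toNNReal b hb] at this

private def varSums (r : ℝ) (m : ℝ → ℝ) (ξ : ℝ) : Set ℝ :=
  {s | ∃ (N : ℕ) (u : Fin (N+1) → ℝ), StrictMono u ∧ (∀ i, 0 ≤ u i) ∧ u (Fin.last N) = ξ ∧
    s = ∑ i : Fin N, |m (u i.succ) - m (u i.castSucc)| ^ r}

private def vfun (r : ℝ) (m : ℝ → ℝ) (ξ : ℝ) : ℝ := sSup (varSums r m ξ)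

private lemma varSums_zero_mem (r : ℝ) (m : ℝ → ℝ) {ξ : ℝ} (hξ : 0 ≤ ξ) :
    0 ∈ varSums r m ξ :=
  ⟨0, fun _ => ξ, fun a b h => absurd (Fin.lt_def.mp h) (by have := a.isLt; have := b.isLt; omega), fun _ => hξ, rfl, by simp⟩

private lemma varSums_le {r : ℝ} {m : ℝ → ℝ} {C : ℝ}
    (hC : ∀ (N : ℕ) (u : Fin (N+1) → ℝ), StrictMono u → (∀ i, 0 ≤ u i) →
      (∑ i : Fin N, |m (u i.succ) - m (u i.castSucc)| ^ r) ≤ C) (ξ : ℝ) :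
    ∀ s ∈ varSums r m ξ, s ≤ C := by
  rintro s ⟨N, u, hmono, hpos, _, rfl⟩
  exact hC N u hmono hpos

private lemma varSums_bddAbove {r : ℝ} {m : ℝ → ℝ} {C : ℝ}
    (hC : ∀ (N : ℕ) (u : Fin (N+1) → ℝ), StrictMono u → (∀ i, 0 ≤ u i) →
      (∑ i : Fin N, |m (u i.succ) - m (u i.castSucc)| ^ r) ≤ C) (ξ : ℝ) :
    BddAbove (varSums r m ξ) := ⟨C, fun s hs => varSums_le hC ξ s hs⟩

private lemma vfun_nonneg {r : ℝ} {m : ℝ → ℝ} {C : ℝ}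
    (hC : ∀ (N : ℕ) (u : Fin (N+1) → ℝ), StrictMono u → (∀ i, 0 ≤ u i) →
      (∑ i : Fin N, |m (u i.succ) - m (u i.castSucc)| ^ r) ≤ C) {ξ : ℝ} (hξ : 0 ≤ ξ) :
    0 ≤ vfun r m ξ :=
  le_csSup (varSums_bddAbove hC ξ) (varSums_zero_mem r m hξ)

private lemma vfun_le {r : ℝ} {m : ℝ → ℝ} {C : ℝ}
    (hC : ∀ (N : ℕ) (u : Fin (N+1) → ℝ), StrictMono u → (∀ i, 0 ≤ u i) →
      (∑ i : Fin N, |m (u i.succ) - m (u i.castSucc)| ^ r) ≤ C) {ξ : ℝ} (hξ : 0 ≤ ξ) :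
    vfun r m ξ ≤ C :=
  csSup_le ⟨0, varSums_zero_mem r m hξ⟩ (varSums_le hC ξ)

private lemma vfun_superadd {r : ℝ} {m : ℝ → ℝ} {C : ℝ}
    (hC : ∀ (N : ℕ) (u : Fin (N+1) → ℝ), StrictMono u → (∀ i, 0 ≤ u i) →
      (∑ i : Fin N, |m (u i.succ) - m (u i.castSucc)| ^ r) ≤ C)
    {x y : ℝ} (hx : 0 ≤ x) (hxy : x < y) :
    vfun r m x + |m y - m x| ^ r ≤ vfun r m y := by
  have hbdd := varSums_bddAbove hC y
  have key : ∀ s ∈ varSums r m x, s + |m y - m x| ^ r ≤ vfun r m y := by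
    rintro s ⟨N, u, hmono, hpos, hlast, rfl⟩
    refine le_csSup hbdd ⟨N+1, Fin.snoc u y,
      aux_snoc_strictMono hmono (by rw [hlast]; exact hxy), ?_, ?_, ?_⟩
    · intro i
      rcases Fin.eq_castSucc_or_eq_last i with ⟨i', rfl⟩ | rfl
      · rw [Fin.snoc_castSucc]; exact hpos i'
      · rw [Fin.snoc_last]; exact le_of_lt (lt_of_le_of_lt hx hxy)
    · rw [Fin.snoc_last]
    · rw [aux_snoc_sum m r u y, hlast]
  have h2 : vfun r m x ≤ vfun r m y - |m y - m x| ^ r :=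
    csSup_le ⟨0, varSums_zero_mem r m hx⟩ (fun s hs => by linarith [key s hs])
  linarith


set_option maxHeartbeats 1000000 in
/-- Lemma 3.4: a compactly supported function on `ℝ⁺` of bounded `r`-variation can be
decomposed as `m = Σ_{j ≥ 0} Σ_{υ ∈ Υ_j} b_υ 1_υ` with `|Υ_j| ≤ 2^j`,
`|b_υ| ≤ ‖m‖_{V^r} 2^{-j/r}`, the sum in `j` converging uniformly on `ℝ⁺`. -/
theorem interval_decomposition (r : ℝ) (hr : 1 ≤ r) (m : ℝ → ℝ)
    (hsupp : ∃ B : ℝ, ∀ x, m x ≠ 0 → x ∈ Set.Icc 0 B)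
    (hvar : vnorm r (Set.Ici 0) m ≠ ⊤) :
    ∃ (Y : ℕ → Set (Set ℝ)) (b : ℕ → Set ℝ → ℝ),
      (∀ j, (Y j).Finite ∧ (Y j).ncard ≤ 2 ^ j ∧ (Y j).PairwiseDisjoint id ∧
        ∀ v ∈ Y j, v ⊆ Set.Ici 0 ∧ v.OrdConnected) ∧
      (∀ j, ∀ v ∈ Y j, (‖b j v‖₊ : ℝ≥0∞) ≤
        vnorm r (Set.Ici 0) m * ENNReal.ofReal (2 ^ (-(j : ℝ) / r))) ∧
      TendstoUniformlyOn
        (fun n x => ∑ j ∈ Finset.range n, ∑ᶠ v ∈ Y j,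
          b j v * Set.indicator v (fun _ => (1 : ℝ)) x)
        m Filter.atTop (Set.Ici 0) := by
  classical
  have hr0 : (0:ℝ) < r := lt_of_lt_of_le zero_lt_one hr
  have hrne : r ≠ 0 := ne_of_gt hr0
  have hir0 : (0:ℝ) ≤ 1/r := by positivity
  have hir0' : (0:ℝ) < 1/r := by positivity
  have hir1 : 1/r ≤ 1 := by rw [div_le_one hr0]; exact hr
  set S : ℝ≥0∞ := ⨆ ξ ∈ Set.Ici (0:ℝ), (‖m ξ‖₊ : ℝ≥0∞) with hS
  set T : ℝ≥0∞ := ⨆ (N : ℕ) (u : Fin (N + 1) → ℝ) (_ : StrictMono u)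
      (_ : ∀ i, u i ∈ Set.Ici (0:ℝ)),
      (∑ i : Fin N, (‖m (u i.succ) - m (u i.castSucc)‖₊ : ℝ≥0∞) ^ r) ^ (1 / r) with hT
  have hVeq : vnorm r (Set.Ici 0) m = S + T := rfl
  have hSne : S ≠ ⊤ := fun h => hvar (by rw [hVeq, h, top_add])
  have hTne : T ≠ ⊤ := fun h => hvar (by rw [hVeq, h, add_top])
  set A := S.toReal with hAdef
  set B := T.toReal with hBdef
  have hA0 : 0 ≤ A := ENNReal.toReal_nonneg
  have hB0 : 0 ≤ B := ENNReal.toReal_nonneg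
  have hSA : S = ENNReal.ofReal A := (ENNReal.ofReal_toReal hSne).symm
  have hTB : T = ENNReal.ofReal B := (ENNReal.ofReal_toReal hTne).symm
  have hmA : ∀ x : ℝ, 0 ≤ x → |m x| ≤ A := by
    intro x hx
    have h1 : (‖m x‖₊ : ℝ≥0∞) ≤ S := by
      rw [hS]
      exact le_iSup₂ (f := fun (ξ : ℝ) (_ : ξ ∈ Set.Ici (0:ℝ)) => ((‖m ξ‖₊ : ℝ≥0∞))) x hx
    rw [hSA, ← ((ofReal_norm _).trans (enorm_eq_nnnorm _))] at h1
    rw [← Real.norm_eq_abs]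
    exact (ENNReal.ofReal_le_ofReal_iff hA0).mp h1
  have hC : ∀ (N : ℕ) (u : Fin (N+1) → ℝ), StrictMono u → (∀ i, 0 ≤ u i) →
      (∑ i : Fin N, |m (u i.succ) - m (u i.castSucc)| ^ r) ≤ B ^ r := by
    intro N u hmono hpos
    set X := ∑ i : Fin N, ((‖m (u i.succ) - m (u i.castSucc)‖₊ : ℝ≥0∞)) ^ r with hX
    have h1 : X ^ (1/r) ≤ T := by
      rw [hT]
      exact le_iSup_of_le N (le_iSup_of_le u (le_iSup_of_le hmono
        (le_iSup_of_le (fun i => hpos i) le_rfl)))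
    have h2 : X ≤ T ^ r := by
      have h := ENNReal.rpow_le_rpow h1 (le_of_lt hr0)
      rwa [← ENNReal.rpow_mul, one_div, inv_mul_cancel₀ hrne, ENNReal.rpow_one] at h
    have h3 : ENNReal.ofReal (∑ i : Fin N, |m (u i.succ) - m (u i.castSucc)| ^ r) = X := by
      rw [ENNReal.ofReal_sum_of_nonneg (fun i _ => Real.rpow_nonneg (abs_nonneg _) r)]
      refine Finset.sum_congr rfl fun i _ => ?_
      rw [← ENNReal.ofReal_rpow_of_nonneg (abs_nonneg _) (le_of_lt hr0), ← Real.norm_eq_abs,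
        ((ofReal_norm _).trans (enorm_eq_nnnorm _))]
    have h4 : T ^ r = ENNReal.ofReal (B ^ r) := by
      rw [hTB, ← ENNReal.ofReal_rpow_of_nonneg hB0 (le_of_lt hr0)]
    refine (ENNReal.ofReal_le_ofReal_iff (Real.rpow_nonneg hB0 r)).mp ?_
    rw [h3, ← h4]; exact h2
  set V := vfun r m with hVdef
  have hV0 : ∀ {x : ℝ}, 0 ≤ x → 0 ≤ V x := fun hx => vfun_nonneg hC hx
  have hVW : ∀ {x : ℝ}, 0 ≤ x → V x ≤ B ^ r := fun hx => vfun_le hC hx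
  have hVsa : ∀ {x y : ℝ}, 0 ≤ x → x < y → V x + |m y - m x| ^ r ≤ V y :=
    fun hx hxy => vfun_superadd hC hx hxy
  have hVmono : ∀ {x y : ℝ}, 0 ≤ x → x ≤ y → V x ≤ V y := by
    intro x y hx hxy
    rcases eq_or_lt_of_le hxy with rfl | h
    · exact le_rfl
    · have h1 := hVsa hx h
      have h2 := Real.rpow_nonneg (abs_nonneg (m y - m x)) r
      linarith
  have hkey : ∀ x ξ : ℝ, 0 ≤ x → 0 ≤ ξ → |m x - m ξ| ≤ |V x - V ξ| ^ (1/r) := by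
    have main : ∀ a c : ℝ, 0 ≤ a → a < c → |m c - m a| ≤ |V c - V a| ^ (1/r) := by
      intro a c ha hac
      have h1 := hVsa ha hac
      have h2 : |m c - m a| ^ r ≤ |V c - V a| := by
        rw [abs_of_nonneg (by linarith [hVmono ha (le_of_lt hac)] : (0:ℝ) ≤ V c - V a)]
        linarith
      calc |m c - m a| = (|m c - m a| ^ r) ^ (1/r) := by
            rw [← Real.rpow_mul (abs_nonneg _), mul_one_div, div_self hrne, Real.rpow_one]
        _ ≤ |V c - V a| ^ (1/r) :=
            Real.rpow_le_rpow (Real.rpow_nonneg (abs_nonneg _) r) h2 hir0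
    intro x ξ hx hξ
    rcases lt_trichotomy x ξ with h | rfl | h
    · rw [abs_sub_comm (m x), abs_sub_comm (V x)]; exact main x ξ hx h
    · simp only [sub_self, abs_zero, Real.zero_rpow (ne_of_gt hir0')]
      exact le_rfl
    · exact main ξ x hξ h
  set φ : ℝ → ℝ := fun t => sInf ((fun ξ => m ξ + |t - V ξ| ^ (1/r)) '' Set.Ici 0) with hphidef
  have hφne : ∀ t : ℝ, ((fun ξ => m ξ + |t - V ξ| ^ (1/r)) '' Set.Ici 0).Nonempty :=
    fun t => ⟨_, ⟨0, Set.self_mem_Ici, rfl⟩⟩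
  have hφbdd : ∀ t : ℝ, BddBelow ((fun ξ => m ξ + |t - V ξ| ^ (1/r)) '' Set.Ici 0) := by
    intro t
    refine ⟨-A, ?_⟩
    rintro z ⟨ξ, hξ, rfl⟩
    have h1 := hmA ξ hξ
    have h2 := Real.rpow_nonneg (abs_nonneg (t - V ξ)) (1/r)
    have h3 := neg_abs_le (m ξ)
    dsimp only
    linarith
  have hφle : ∀ t ξ : ℝ, 0 ≤ ξ → φ t ≤ m ξ + |t - V ξ| ^ (1/r) :=
    fun t ξ hξ => csInf_le (hφbdd t) ⟨ξ, hξ, rfl⟩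
  have hφV : ∀ x : ℝ, 0 ≤ x → φ (V x) = m x := by
    intro x hx
    refine le_antisymm ?_ ?_
    · have h := hφle (V x) x hx
      rw [sub_self, abs_zero, Real.zero_rpow (ne_of_gt hir0'), add_zero] at h
      exact h
    · refine le_csInf (hφne _) ?_
      rintro z ⟨ξ, hξ, rfl⟩
      have h := le_trans (le_abs_self (m x - m ξ)) (hkey x ξ hx hξ)
      dsimp only
      linarith
  have hφH : ∀ s t : ℝ, |φ s - φ t| ≤ |s - t| ^ (1/r) := by
    have half : ∀ s t : ℝ, φ s ≤ φ t + |s - t| ^ (1/r) := by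
      intro s t
      have step : ∀ ξ : ℝ, 0 ≤ ξ → φ s - |s - t| ^ (1/r) ≤ m ξ + |t - V ξ| ^ (1/r) := by
        intro ξ hξ
        have h1 : φ s ≤ m ξ + |s - V ξ| ^ (1/r) := hφle s ξ hξ
        have h2 : |s - V ξ| ^ (1/r) ≤ |t - V ξ| ^ (1/r) + |s - t| ^ (1/r) := by
          have habs : |s - V ξ| ≤ |t - V ξ| + |s - t| := by
            have h := abs_sub_le s t (V ξ)
            linarith [abs_sub_comm s t]
          calc |s - V ξ| ^ (1/r) ≤ (|t - V ξ| + |s - t|) ^ (1/r) :=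
                Real.rpow_le_rpow (abs_nonneg _) habs hir0
            _ ≤ |t - V ξ| ^ (1/r) + |s - t| ^ (1/r) :=
                aux_rpow_subadd (abs_nonneg _) (abs_nonneg _) hir0 hir1
        linarith
      have h : φ s - |s - t| ^ (1/r) ≤ φ t := by
        refine le_csInf (hφne t) ?_
        rintro z ⟨ξ, hξ, rfl⟩
        exact step ξ hξ
      linarith
    intro s t
    rw [abs_sub_le_iff]
    constructor
    · have h := half s t; linarith
    · have h := half t s; rw [abs_sub_comm t s] at h; linarith
  set W := B ^ r with hWdef
  have hW0 : 0 ≤ W := Real.rpow_nonneg hB0 r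
  set δ : ℕ → ℝ := fun j => W / 2 ^ j with hdel
  have hδ0 : ∀ j, 0 ≤ δ j := fun j => by rw [hdel]; positivity
  have hδhalf : ∀ j, δ j = 2 * δ (j+1) := by
    intro j; rw [hdel]; dsimp only; rw [pow_succ]; ring
  have hδW : ∀ j, (2:ℝ) ^ j * δ j = W := by
    intro j; rw [hdel]; dsimp only; field_simp
  set K : ℕ → ℝ → ℕ := fun j t => min ⌊t / δ j⌋₊ (2 ^ j - 1) with hKdef
  have h2j1 : ∀ j : ℕ, (1:ℕ) ≤ 2 ^ j := fun j => Nat.one_le_two_pow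
  have hKlt : ∀ j t, K j t < 2 ^ j := by
    intro j t
    calc K j t ≤ 2 ^ j - 1 := min_le_right _ _
      _ < 2 ^ j := by have := h2j1 j; omega
  have hKmono : ∀ (j : ℕ) {s t : ℝ}, s ≤ t → K j s ≤ K j t := by
    intro j s t hst
    rcases eq_or_lt_of_le (hδ0 j) with hδz | hδp
    · have he : s / δ j = t / δ j := by rw [← hδz]; simp
      rw [hKdef]; dsimp only; rw [he]
    · exact min_le_min (Nat.floor_le_floor (by gcongr)) le_rfl
  have hKcast : ∀ j : ℕ, ((2 ^ j - 1 : ℕ) : ℝ) = 2 ^ j - 1 := by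
    intro j
    have := h2j1 j
    push_cast [this]
    ring
  have hKapprox : ∀ j t, 0 ≤ t → t ≤ W → δ j * K j t ≤ t ∧ t ≤ δ j * K j t + δ j := by
    intro j t ht htW
    rcases eq_or_lt_of_le (hδ0 j) with hδz | hδp
    · have hWz : W = 0 := by
        have h2 : (0:ℝ) < 2 ^ j := by positivity
        have := hδW j
        rw [← hδz, mul_zero] at this
        linarith
      have htz : t = 0 := le_antisymm (hWz ▸ htW) ht
      rw [← hδz, htz]
      norm_num
    · have hfl : (0:ℝ) ≤ t / δ j := by positivity
      constructor
      · calc δ j * K j t ≤ δ j * ⌊t / δ j⌋₊ :=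
              mul_le_mul_of_nonneg_left
                (by exact_mod_cast min_le_left ⌊t / δ j⌋₊ (2 ^ j - 1)) (le_of_lt hδp)
          _ ≤ δ j * (t / δ j) := by
              gcongr
              exact Nat.floor_le hfl
          _ = t := by field_simp
      · rcases le_or_gt (⌊t / δ j⌋₊) (2 ^ j - 1) with hle | hgt
        · have hK : K j t = ⌊t / δ j⌋₊ := min_eq_left hle
          have hlt : t / δ j < ⌊t / δ j⌋₊ + 1 := Nat.lt_floor_add_one _
          have hlt2 : t < ((⌊t / δ j⌋₊ : ℝ) + 1) * δ j := (div_lt_iff₀ hδp).mp hlt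
          rw [hK]; nlinarith [hlt2]
        · have hK : K j t = 2 ^ j - 1 := min_eq_right (by omega)
          have h3 : ((2:ℝ) ^ j) ≤ t / δ j := by
            calc ((2:ℝ) ^ j) ≤ (⌊t / δ j⌋₊ : ℝ) := by
                  have : (2:ℕ) ^ j ≤ ⌊t / δ j⌋₊ := by omega
                  exact_mod_cast this
              _ ≤ t / δ j := Nat.floor_le hfl
          have h4 : W ≤ t := by
            have := (le_div_iff₀ hδp).mp h3
            rw [mul_comm] at this
            linarith [hδW j]
          have h5 : t = W := le_antisymm htW h4
          rw [hK, hKcast j, h5, ← hδW j]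
          ring_nf
          exact le_rfl
  have hKdiv : ∀ (j : ℕ) (t : ℝ), K j t = K (j+1) t / 2 := by
    intro j t
    have hfloor : ⌊t / δ j⌋₊ = ⌊t / δ (j+1)⌋₊ / 2 := by
      rw [hδhalf j]
      have he : t / (2 * δ (j+1)) = (t / δ (j+1)) / 2 := by
        field_simp
      rw [he]
      have := Nat.floor_div_natCast (t / δ (j+1)) 2
      exact_mod_cast this
    rw [hKdef]; dsimp only
    rw [hfloor]
    have h1 := h2j1 j
    have h2 : (2:ℕ) ^ (j+1) = 2 * 2 ^ j := by rw [pow_succ]; ring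
    omega
  have hδr : ∀ j : ℕ, (δ j) ^ (1/r) = B * (2:ℝ) ^ (-(j : ℝ) / r) := by
    intro j
    rw [hdel]; dsimp only
    rw [div_eq_mul_inv, hWdef, Real.mul_rpow (Real.rpow_nonneg hB0 r) (by positivity),
      ← Real.rpow_mul hB0, mul_one_div, div_self hrne, Real.rpow_one,
      ← Real.rpow_natCast (2:ℝ) j, ← Real.rpow_neg (by norm_num : (0:ℝ) ≤ 2),
      ← Real.rpow_mul (by norm_num : (0:ℝ) ≤ 2)]
    rw [neg_mul, mul_one_div, neg_div]
  set cell : ℕ → ℕ → Set ℝ := fun j k => {x : ℝ | 0 ≤ x ∧ K j (V x) = k} with hcelldef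
  set P : ℕ → ℝ → ℝ := fun j x => φ (δ j * K j (V x)) with hPdef
  set prev : ℕ → ℝ → ℝ := fun j x => if j = 0 then 0 else P (j-1) x with hprevdef
  set b : ℕ → Set ℝ → ℝ :=
    fun j v => if h : v.Nonempty then P j h.some - prev j h.some else 0 with hbdef
  set Yf : ℕ → Finset (Set ℝ) :=
    fun j => ((Finset.range (2 ^ j)).filter (fun k => (cell j k).Nonempty)).image (cell j)
    with hYfdef
  have hcellmem : ∀ j x, 0 ≤ x → x ∈ cell j (K j (V x)) := fun j x hx => ⟨hx, rfl⟩
  have hmemYf : ∀ j x, 0 ≤ x → cell j (K j (V x)) ∈ Yf j := by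
    intro j x hx
    rw [hYfdef]
    exact Finset.mem_image_of_mem _
      (Finset.mem_filter.mpr ⟨Finset.mem_range.mpr (hKlt j (V x)), ⟨x, hcellmem j x hx⟩⟩)
  have hPconst : ∀ j k, ∀ x ∈ cell j k, ∀ y ∈ cell j k,
      P j x - prev j x = P j y - prev j y := by
    intro j k x hx y hy
    obtain ⟨hx0, hxk⟩ := hx
    obtain ⟨hy0, hyk⟩ := hy
    have hP : P j x = P j y := by rw [hPdef]; dsimp only; rw [hxk, hyk]
    have hprev : prev j x = prev j y := by
      rw [hprevdef]
      rcases Nat.eq_zero_or_pos j with rfl | hj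
      · simp
      · have hj0 : j ≠ 0 := Nat.pos_iff_ne_zero.mp hj
        simp only [hj0, if_false]
        have e : ∀ z : ℝ, K (j-1) (V z) = K j (V z) / 2 := by
          intro z
          have h := hKdiv (j-1) (V z)
          rwa [show j - 1 + 1 = j by omega] at h
        rw [hPdef]; dsimp only
        rw [e x, e y, hxk, hyk]
    rw [hP, hprev]
  have hbcell : ∀ j k x, x ∈ cell j k → b j (cell j k) = P j x - prev j x := by
    intro j k x hx
    have hne : (cell j k).Nonempty := ⟨x, hx⟩
    rw [hbdef]; dsimp only
    rw [dif_pos hne]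
    exact hPconst j k _ hne.some_mem _ hx
  have hVapprox : ∀ j x, 0 ≤ x → |V x - δ j * K j (V x)| ≤ δ j := by
    intro j x hx
    obtain ⟨h1, h2⟩ := hKapprox j (V x) (hV0 hx) (hVW hx)
    rw [abs_le]
    constructor <;> linarith
  have hberr : ∀ (j : ℕ) (x : ℝ), 0 ≤ x → |m x - P j x| ≤ B * (2:ℝ) ^ (-(j : ℝ) / r) := by
    intro j x hx
    have h1 : |m x - P j x| = |φ (V x) - φ (δ j * K j (V x))| := by
      rw [hφV x hx, hPdef]
    rw [h1, ← hδr j]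
    calc |φ (V x) - φ (δ j * K j (V x))| ≤ |V x - δ j * K j (V x)| ^ (1/r) := hφH _ _
      _ ≤ (δ j) ^ (1/r) :=
          Real.rpow_le_rpow (abs_nonneg _) (hVapprox j x hx) hir0
  have hbstep : ∀ (j : ℕ) (x : ℝ), 0 ≤ x →
      |P (j+1) x - P j x| ≤ B * (2:ℝ) ^ (-((j:ℝ)+1) / r) := by
    intro j x hx
    have e : K j (V x) = K (j+1) (V x) / 2 := hKdiv j (V x)
    set k := K (j+1) (V x) with hkdef
    have hn1 : 2 * (k/2) ≤ k := by omega
    have hn2 : k ≤ 2 * (k/2) + 1 := by omega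
    have hc1 : 2 * ((k/2 : ℕ) : ℝ) ≤ (k : ℝ) := by exact_mod_cast hn1
    have hc2 : (k : ℝ) ≤ 2 * ((k/2 : ℕ) : ℝ) + 1 := by exact_mod_cast hn2
    have hgap : |δ (j+1) * ((k : ℕ) : ℝ) - δ j * ((k/2 : ℕ) : ℝ)| ≤ δ (j+1) := by
      rw [hδhalf j, abs_le]
      constructor <;> nlinarith [hδ0 (j+1)]
    have hstep : |P (j+1) x - P j x| ≤
        |δ (j+1) * ((k : ℕ) : ℝ) - δ j * ((k/2 : ℕ) : ℝ)| ^ (1/r) := by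
      rw [hPdef]; dsimp only
      rw [e]
      exact hφH _ _
    calc |P (j+1) x - P j x| ≤ |δ (j+1) * ((k : ℕ) : ℝ) - δ j * ((k/2 : ℕ) : ℝ)| ^ (1/r) := hstep
      _ ≤ (δ (j+1)) ^ (1/r) := Real.rpow_le_rpow (abs_nonneg _) hgap hir0
      _ = B * (2:ℝ) ^ (-((j:ℝ)+1) / r) := by rw [hδr (j+1)]; push_cast; ring_nf
  have hfin : ∀ (j : ℕ) (x : ℝ), 0 ≤ x →
      (∑ᶠ v ∈ ((Yf j : Set (Set ℝ))), b j v * Set.indicator v (fun _ => (1:ℝ)) x)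
        = P j x - prev j x := by
    intro j x hx
    rw [finsum_mem_coe_finset]
    rw [Finset.sum_eq_single_of_mem (cell j (K j (V x))) (hmemYf j x hx)]
    · rw [Set.indicator_of_mem (hcellmem j x hx), mul_one]
      exact hbcell j _ x (hcellmem j x hx)
    · intro v hv hvne
      obtain ⟨k, hk, rfl⟩ := Finset.mem_image.mp hv
      have hxnot : x ∉ cell j k := by
        intro hmem
        exact hvne (by rw [← hmem.2])
      rw [Set.indicator_of_notMem hxnot, mul_zero]
  have htel : ∀ (x : ℝ) (n : ℕ),
      ∑ j ∈ Finset.range (n+1), (P j x - prev j x) = P n x := by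
    intro x n
    induction n with
    | zero => simp [hprevdef]
    | succ n ih =>
        rw [Finset.sum_range_succ, ih]
        have hp : prev (n+1) x = P n x := by rw [hprevdef]; simp
        rw [hp]; ring
  refine ⟨fun j => (Yf j : Set (Set ℝ)), b, ?_, ?_, ?_⟩
  · intro j
    refine ⟨(Yf j).finite_toSet, ?_, ?_, ?_⟩
    · rw [Set.ncard_coe_finset]
      calc (Yf j).card ≤ ((Finset.range (2^j)).filter (fun k => (cell j k).Nonempty)).card :=
            Finset.card_image_le
        _ ≤ (Finset.range (2^j)).card := Finset.card_filter_le _ _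
        _ = 2 ^ j := Finset.card_range _
    · intro v hv w hw hvw
      obtain ⟨k, hk, rfl⟩ := Finset.mem_image.mp (Finset.mem_coe.mp hv)
      obtain ⟨k', hk', rfl⟩ := Finset.mem_image.mp (Finset.mem_coe.mp hw)
      have hkk : k ≠ k' := fun h => hvw (by rw [h])
      have hdisj : Disjoint (cell j k) (cell j k') := by
        rw [Set.disjoint_left]
        rintro x ⟨hx0, hxk⟩ ⟨hx0', hxk'⟩
        exact hkk (hxk.symm.trans hxk')
      exact hdisj
    · intro v hv
      obtain ⟨k, hk, rfl⟩ := Finset.mem_image.mp (Finset.mem_coe.mp hv)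
      refine ⟨fun x hx => hx.1, ?_⟩
      constructor
      intro x hx y hy z hz
      have hz0 : (0:ℝ) ≤ z := le_trans hx.1 hz.1
      refine ⟨hz0, le_antisymm ?_ ?_⟩
      · rw [← hy.2]
        exact hKmono j (hVmono hz0 hz.2)
      · rw [← hx.2]
        exact hKmono j (hVmono hx.1 hz.1)
  · intro j v hv
    obtain ⟨k, hk, rfl⟩ := Finset.mem_image.mp (Finset.mem_coe.mp hv)
    obtain ⟨hkr, hkne⟩ := Finset.mem_filter.mp hk
    set x₀ := hkne.some with hx0def
    have hx₀mem : x₀ ∈ cell j k := hkne.some_mem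
    have hx₀0 : (0:ℝ) ≤ x₀ := hx₀mem.1
    have hbv : b j (cell j k) = P j x₀ - prev j x₀ := hbcell j k x₀ hx₀mem
    rw [hVeq, hbv, ← ((ofReal_norm _).trans (enorm_eq_nnnorm _)), Real.norm_eq_abs]
    rcases Nat.eq_zero_or_pos j with rfl | hj
    · have hp0 : prev 0 x₀ = 0 := by rw [hprevdef]; simp
      have herr := hberr 0 x₀ hx₀0
      have hz : (-((0:ℕ):ℝ) / r) = 0 := by norm_num
      rw [hz, Real.rpow_zero, mul_one] at herr
      have hreal : |P 0 x₀ - prev 0 x₀| ≤ A + B := by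
        rw [hp0, sub_zero, abs_le]
        have h1 := (abs_le.mp herr).1
        have h2 := (abs_le.mp herr).2
        have h3 := (abs_le.mp (hmA x₀ hx₀0)).1
        have h4 := (abs_le.mp (hmA x₀ hx₀0)).2
        constructor <;> linarith
      calc ENNReal.ofReal |P 0 x₀ - prev 0 x₀| ≤ ENNReal.ofReal (A + B) :=
            ENNReal.ofReal_le_ofReal hreal
        _ = S + T := by rw [ENNReal.ofReal_add hA0 hB0, ← hSA, ← hTB]
        _ = (S + T) * ENNReal.ofReal (2 ^ (-((0:ℕ) : ℝ) / r)) := by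
            rw [hz, Real.rpow_zero, ENNReal.ofReal_one, mul_one]
    · obtain ⟨j', rfl⟩ : ∃ j', j = j' + 1 := ⟨j - 1, by omega⟩
      have hp1 : prev (j'+1) x₀ = P j' x₀ := by rw [hprevdef]; simp
      rw [hp1]
      have hstep := hbstep j' x₀ hx₀0
      have hexp : (-((j':ℝ)+1) / r) = (-(((j'+1:ℕ)):ℝ) / r) := by push_cast; ring
      calc ENNReal.ofReal |P (j'+1) x₀ - P j' x₀|
          ≤ ENNReal.ofReal (B * (2:ℝ) ^ (-(((j'+1:ℕ)):ℝ) / r)) := by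
            rw [← hexp]
            exact ENNReal.ofReal_le_ofReal hstep
        _ = ENNReal.ofReal B * ENNReal.ofReal ((2:ℝ) ^ (-(((j'+1:ℕ)):ℝ) / r)) :=
            ENNReal.ofReal_mul hB0
        _ = T * ENNReal.ofReal ((2:ℝ) ^ (-(((j'+1:ℕ)):ℝ) / r)) := by rw [← hTB]
        _ ≤ (S + T) * ENNReal.ofReal ((2:ℝ) ^ (-(((j'+1:ℕ)):ℝ) / r)) :=
            mul_le_mul_left le_add_self _
  · rw [Metric.tendstoUniformlyOn_iff]
    intro ε hε
    set q : ℝ := (2:ℝ) ^ (-(1:ℝ)/r) with hqdef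
    have hq0 : 0 ≤ q := Real.rpow_nonneg (by norm_num) _
    have hq1 : q < 1 := by
      rw [hqdef]
      exact Real.rpow_lt_one_of_one_lt_of_neg (by norm_num) (by rw [neg_div]; linarith [hir0'])
    have hqj : ∀ j : ℕ, B * (2:ℝ) ^ (-(j:ℝ)/r) = B * q ^ j := by
      intro j
      congr 1
      rw [hqdef, ← Real.rpow_natCast ((2:ℝ) ^ (-(1:ℝ)/r)) j,
        ← Real.rpow_mul (by norm_num : (0:ℝ) ≤ 2)]
      congr 1
      ring
    have htend : Tendsto (fun n : ℕ => B * q ^ n) atTop (nhds 0) := by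
      have h := tendsto_pow_atTop_nhds_zero_of_lt_one hq0 hq1
      simpa using h.const_mul B
    obtain ⟨n₀, hn₀⟩ := Filter.eventually_atTop.mp (htend.eventually (gt_mem_nhds hε))
    filter_upwards [Filter.eventually_ge_atTop (n₀ + 1)] with n hn
    intro x hx
    have hx0 : (0:ℝ) ≤ x := hx
    obtain ⟨nn, rfl⟩ : ∃ nn, n = nn + 1 := ⟨n - 1, by omega⟩
    have hsum : (∑ j ∈ Finset.range (nn+1), ∑ᶠ v ∈ ((Yf j : Set (Set ℝ))),
        b j v * Set.indicator v (fun _ => (1:ℝ)) x) = P nn x := by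
      rw [Finset.sum_congr rfl (fun j _ => hfin j x hx0)]
      exact htel x nn
    rw [Real.dist_eq, hsum]
    have herr := hberr nn x hx0
    rw [hqj nn] at herr
    calc |m x - P nn x| ≤ B * q ^ nn := herr
      _ < ε := hn₀ nn (by omega)

end
end

section
/- Suppose a finite collection of bitiles P can be written as the union of convex trees, P = ⋃_{T∈T} T, where each tree in T is td-maximal among trees contained in P. Then P can be written as P = ⋃_{T∈T^u} T ∪ ⋃_{T∈T^l} T, where: (1) each T ∈ T^u is a u-overlapping tree which is td-maximal among u-overlapping trees contained in ⋃_{T∈T^u} T; (2) T^l is a properly-sorted collection of l-overlapping trees; (3) the sets of bitiles ⋃_{T∈T^u} T and ⋃_{T∈T^l} T are disjoint; and (4) the set of top data {(ξ_T, I_T) : T ∈ T^u} equals {(ξ_T, I_T) : T ∈ T^l} and is contained in {(ξ_T, I_T) : T ∈ T}. -/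
open MeasureTheory Set Filter
open scoped ENNReal NNReal Classical BigOperators RealInnerProductSpace

noncomputable section

private lemma two_zpow_pos (k : ℤ) : (0:ℝ) < 2 ^ k := zpow_pos (by norm_num) k

private lemma dyadic_mono_aux {n k n' k' : ℤ} (hk : k ≤ k') {x : ℝ}
    (h1 : (n:ℝ) * 2^k ≤ x) (h2 : x < ((n:ℝ)+1) * 2^k)
    (h3 : (n':ℝ) * 2^k' ≤ x) (h4 : x < ((n':ℝ)+1) * 2^k') :
    Set.Ico ((n:ℝ) * 2^k) (((n:ℝ)+1) * 2^k) ⊆ Set.Ico ((n':ℝ) * 2^k') (((n':ℝ)+1) * 2^k') := by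
  have hTpos : (0:ℤ) < 2 ^ (k' - k).toNat := by positivity
  have h2T : (2:ℝ)^k' = ((2 ^ (k' - k).toNat : ℤ) : ℝ) * 2^k := by
    push_cast
    rw [← zpow_natCast (2:ℝ), Int.toNat_of_nonneg (sub_nonneg.mpr hk),
      ← zpow_add₀ (two_ne_zero) (k' - k) k]
    congr 1; ring
  set T : ℤ := 2 ^ (k' - k).toNat with hT
  have key1 : (n':ℝ) * 2^k' ≤ (n:ℝ) * 2^k := by
    by_contra hcon
    push_neg at hcon
    rw [h2T, ← mul_assoc] at hcon
    have hZ : (n:ℝ) < ((n' * T : ℤ) : ℝ) := by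
      have := (mul_lt_mul_iff_of_pos_right (two_zpow_pos k)).mp hcon
      push_cast; push_cast at this; linarith
    have hZ' : n < n' * T := by exact_mod_cast hZ
    have hZ1 : ((n:ℝ) + 1) ≤ ((n' * T : ℤ) : ℝ) := by exact_mod_cast hZ'
    have : ((n:ℝ)+1) * 2^k ≤ (n':ℝ) * 2^k' := by
      rw [h2T, ← mul_assoc]
      have := mul_le_mul_of_nonneg_right hZ1 (two_zpow_pos k).le
      push_cast at this ⊢; linarith
    linarith
  have key2 : ((n:ℝ)+1) * 2^k ≤ ((n':ℝ)+1) * 2^k' := by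
    by_contra hcon
    push_neg at hcon
    rw [h2T, ← mul_assoc] at hcon
    have hZ : (((n'+1) * T : ℤ) : ℝ) < (n:ℝ) + 1 := by
      have := (mul_lt_mul_iff_of_pos_right (two_zpow_pos k)).mp hcon
      push_cast; push_cast at this; linarith
    have hZ' : (n'+1) * T < n + 1 := by exact_mod_cast hZ
    have hZ1 : (((n'+1) * T : ℤ) : ℝ) ≤ (n:ℝ) := by
      have : (n'+1) * T ≤ n := by omega
      exact_mod_cast this
    have : ((n':ℝ)+1) * 2^k' ≤ (n:ℝ) * 2^k := by
      rw [h2T, ← mul_assoc]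
      have := mul_le_mul_of_nonneg_right hZ1 (two_zpow_pos k).le
      push_cast at this ⊢; linarith
    linarith
  exact Set.Ico_subset_Ico key1 key2

private lemma dyadic_nested {I J : Set ℝ} (hI : IsDyadic I) (hJ : IsDyadic J)
    (h : (I ∩ J).Nonempty) : I ⊆ J ∨ J ⊆ I := by
  obtain ⟨n, k, rfl⟩ := hI
  obtain ⟨n', k', rfl⟩ := hJ
  obtain ⟨x, hx1, hx2⟩ := h
  rcases le_total k k' with hk | hk
  · exact Or.inl (dyadic_mono_aux hk hx1.1 hx1.2 hx2.1 hx2.2)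
  · exact Or.inr (dyadic_mono_aux hk hx2.1 hx2.2 hx1.1 hx1.2)

private lemma dyadic_Ico {I : Set ℝ} (hI : IsDyadic I) : ∃ a b : ℝ, a < b ∧ I = Set.Ico a b := by
  obtain ⟨n, k, rfl⟩ := hI
  exact ⟨_, _, by nlinarith [two_zpow_pos k], rfl⟩

private lemma dyadic_vol {I : Set ℝ} (hI : IsDyadic I) :
    ∃ kk : ℤ, volume I = ENNReal.ofReal ((2:ℝ)^kk) := by
  obtain ⟨n, k, rfl⟩ := hI
  exact ⟨k, by rw [Real.volume_Ico]; congr 1; ring⟩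

private lemma dyadic_eq_of_subset {I J : Set ℝ} (hI : IsDyadic I) (hJ : IsDyadic J)
    (hsub : I ⊆ J) (hv : volume J ≤ volume I) : I = J := by
  obtain ⟨a, b, hab, rfl⟩ := dyadic_Ico hI
  obtain ⟨c, d, hcd, rfl⟩ := dyadic_Ico hJ
  rw [Real.volume_Ico, Real.volume_Ico] at hv
  have h1 := (Set.Ico_subset_Ico_iff hab).mp hsub
  have h2 : d - c ≤ b - a := (ENNReal.ofReal_le_ofReal_iff (by linarith)).mp hv
  rw [show a = c by linarith [h1.1, h1.2], show b = d by linarith [h1.1, h1.2]]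

private lemma dyadic_vol_lt {I J : Set ℝ} (hI : IsDyadic I) (hJ : IsDyadic J)
    (hsub : I ⊆ J) (hne : I ≠ J) : volume I < volume J := by
  rcases lt_or_ge (volume I) (volume J) with h | h
  · exact h
  · exact absurd (dyadic_eq_of_subset hI hJ hsub h) hne

private lemma lowerHalf_Ico {a b : ℝ} (h : a < b) :
    lowerHalf (Set.Ico a b) = Set.Ico a ((a+b)/2) := by
  unfold lowerHalf
  rw [csInf_Ico h, csSup_Ico h]
  ext x
  simp only [Set.mem_inter_iff, Set.mem_Ico, Set.mem_Iio]
  constructor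
  · rintro ⟨⟨h1, _⟩, h3⟩; exact ⟨h1, h3⟩
  · rintro ⟨h1, h2⟩; exact ⟨⟨h1, by linarith⟩, h2⟩

private lemma upperHalf_Ico {a b : ℝ} (h : a < b) :
    upperHalf (Set.Ico a b) = Set.Ico ((a+b)/2) b := by
  unfold upperHalf
  rw [csInf_Ico h, csSup_Ico h]
  ext x
  simp only [Set.mem_inter_iff, Set.mem_Ico, Set.mem_Ici]
  constructor
  · rintro ⟨⟨_, h2⟩, h3⟩; exact ⟨h3, h2⟩
  · rintro ⟨h1, h2⟩; exact ⟨⟨by linarith, h2⟩, h1⟩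

private lemma dyadic_lowerHalf {ω : Set ℝ} (h : IsDyadic ω) :
    IsDyadic (lowerHalf ω) ∧ ∃ kk : ℤ, volume ω = ENNReal.ofReal ((2:ℝ)^kk) ∧
      volume (lowerHalf ω) = ENNReal.ofReal ((2:ℝ)^(kk-1)) := by
  obtain ⟨n, k, rfl⟩ := h
  have h2 : (2:ℝ)^k = 2 * 2^(k-1) := by
    rw [show k = (k-1) + 1 by ring, zpow_add₀ (two_ne_zero) (k-1) 1]
    ring_nf
  have hab : (n:ℝ) * 2^k < ((n:ℝ)+1) * 2^k := by nlinarith [two_zpow_pos k]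
  have hlh : lowerHalf (Set.Ico ((n:ℝ) * 2^k) (((n:ℝ)+1) * 2^k))
      = Set.Ico (((2*n : ℤ):ℝ) * 2^(k-1)) ((((2*n : ℤ):ℝ)+1) * 2^(k-1)) := by
    have e1 : (n:ℝ) * 2^k = ((2*n : ℤ):ℝ) * 2^(k-1) := by push_cast; rw [h2]; ring
    have e2 : ((n:ℝ) * 2^k + ((n:ℝ)+1) * 2^k)/2 = (((2*n : ℤ):ℝ)+1) * 2^(k-1) := by
      push_cast; rw [h2]; ring
    rw [lowerHalf_Ico hab, e2, e1]
  constructor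
  · exact ⟨2*n, k-1, hlh⟩
  · refine ⟨k, ?_, ?_⟩
    · rw [Real.volume_Ico]; congr 1; ring
    · rw [hlh, Real.volume_Ico]; congr 1; push_cast; ring

private lemma dyadic_subset_lowerHalf {ω ω' : Set ℝ} (hω : IsDyadic ω) (hω' : IsDyadic ω')
    (hsub : ω' ⊆ ω) (hne : ω' ≠ ω) {x : ℝ} (hx' : x ∈ ω') (hx : x ∈ lowerHalf ω) :
    ω' ⊆ lowerHalf ω := by
  obtain ⟨hdy, k, hvol, hvoll⟩ := dyadic_lowerHalf hω
  obtain ⟨k', hvol'⟩ := dyadic_vol hω'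
  have hlt : volume ω' < volume ω := dyadic_vol_lt hω' hω hsub hne
  rw [hvol, hvol'] at hlt
  have hrlt : (2:ℝ)^k' < 2^k :=
    (ENNReal.ofReal_lt_ofReal_iff (two_zpow_pos k)).mp hlt
  have hkk : k' < k := (zpow_lt_zpow_iff_right₀ (by norm_num : (1:ℝ) < 2)).mp hrlt
  have hvle : volume ω' ≤ volume (lowerHalf ω) := by
    rw [hvol', hvoll]
    exact ENNReal.ofReal_le_ofReal
      ((zpow_le_zpow_iff_right₀ (by norm_num : (1:ℝ) < 2)).mpr (by omega))
  rcases dyadic_nested hω' hdy ⟨x, hx', hx⟩ with h | h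
  · exact h
  · exact (dyadic_eq_of_subset hdy hω' h hvle).symm.subset

private lemma lowerHalf_subset (ω : Set ℝ) : lowerHalf ω ⊆ ω := Set.inter_subset_left
private lemma upperHalf_subset (ω : Set ℝ) : upperHalf ω ⊆ ω := Set.inter_subset_left
private lemma mem_lower_or_upper {ω : Set ℝ} {x : ℝ} (h : x ∈ ω) :
    x ∈ lowerHalf ω ∨ x ∈ upperHalf ω := by
  rcases lt_or_ge x ((sInf ω + sSup ω)/2) with h' | h'
  · exact Or.inl ⟨h, h'⟩
  · exact Or.inr ⟨h, h'⟩
private lemma lower_lt_upper {ω : Set ℝ} {x y : ℝ} (hx : x ∈ lowerHalf ω)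
    (hy : y ∈ upperHalf ω) : x < y := lt_of_lt_of_le hx.2 hy.2
private lemma not_upper_of_lower {ω : Set ℝ} {x : ℝ} (hx : x ∈ lowerHalf ω) :
    x ∉ upperHalf ω := fun hu => absurd (lower_lt_upper hx hu) (lt_irrefl x)

private lemma enn_aux {a b : ℝ≥0∞} (h : a * b = 2) : a ≠ 0 ∧ a ≠ ⊤ := by
  constructor
  · rintro rfl; rw [zero_mul] at h; simp at h
  · rintro rfl
    rcases eq_or_ne b 0 with rfl | hb
    · rw [mul_zero] at h; simp at h
    · rw [ENNReal.top_mul hb] at h; exact absurd h.symm (ENNReal.ofNat_ne_top)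

private lemma vol_omega_le {P Q : Bitile} (h : volume P.I ≤ volume Q.I) :
    volume Q.ω ≤ volume P.ω := by
  have hQ := Q.harea
  have h1 : volume Q.I * volume Q.ω ≤ volume Q.I * volume P.ω := by
    calc volume Q.I * volume Q.ω = volume P.I * volume P.ω := by rw [P.harea, hQ]
    _ ≤ volume Q.I * volume P.ω := mul_le_mul_left h _
  exact (ENNReal.mul_le_mul_iff_right (enn_aux hQ).1 (enn_aux hQ).2).mp h1

private lemma vol_omega_lt {P Q : Bitile} (h : volume P.I < volume Q.I) :
    volume Q.ω < volume P.ω := by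
  have hle := vol_omega_le h.le
  rcases hle.lt_or_eq with h' | h'
  · exact h'
  · exfalso
    have hωP := enn_aux (by rw [mul_comm]; exact P.harea)
    have heq : volume P.I * volume P.ω = volume Q.I * volume P.ω := by
      rw [P.harea, ← h', Q.harea]
    have : volume P.I = volume Q.I :=
      le_antisymm ((ENNReal.mul_le_mul_iff_left hωP.1 hωP.2).mp heq.le)
        ((ENNReal.mul_le_mul_iff_left hωP.1 hωP.2).mp heq.ge)
    exact absurd this h.ne

private lemma bitile_ext {P Q : Bitile} (h1 : P.I = Q.I) (h2 : P.ω = Q.ω) : P = Q := by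
  cases P; cases Q; cases h1; cases h2; rfl

private lemma lowerLE_le {P Q : Bitile} (h : lowerLE P Q) : Bitile.le P Q := by
  refine ⟨h.1, ?_⟩
  obtain ⟨a, b, hab, hQω⟩ := dyadic_Ico Q.hω
  have hne : (lowerHalf Q.ω).Nonempty := by
    rw [hQω, lowerHalf_Ico hab]
    exact Set.nonempty_Ico.mpr (by linarith)
  obtain ⟨x, hx⟩ := hne
  have hv : volume Q.ω ≤ volume P.ω := vol_omega_le (measure_mono h.1)
  rcases dyadic_nested Q.hω P.hω ⟨x, lowerHalf_subset _ hx, lowerHalf_subset _ (h.2 hx)⟩ with h' | h'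
  · exact h'
  · exact (dyadic_eq_of_subset P.hω Q.hω h' hv).symm.subset

private def fuT (Ps : Set Bitile) (d : ℝ × Set ℝ) : WTree :=
  ⟨{P | P ∈ Ps ∧ P.I ⊆ d.2 ∧ d.1 ∈ upperHalf P.ω}, d.1, d.2⟩

private def flT (Lt : Set Bitile) (c : Bitile → ℝ × Set ℝ) (d : ℝ × Set ℝ) : WTree :=
  ⟨{P | P ∈ Lt ∧ c P = d}, d.1, d.2⟩

/-- Lemma 4.2 (tree sorting): a finite collection of bitiles which is a union of convex
td-maximal trees can be rewritten as a union of td-maximal `u`-overlapping trees together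
with a properly-sorted collection of `l`-overlapping trees, with disjoint bitile sets and
matching top data. -/
theorem tree_sorting (Ps : Set Bitile) (hfin : Ps.Finite) (Ts : Set WTree)
    (hcover : Ps = ⋃ T ∈ Ts, T.carrier)
    (htree : ∀ T ∈ Ts, IsTree T ∧ ConvexBitiles T.carrier)
    (hmax : ∀ T ∈ Ts, TdMaximalAmong T {T' | IsTree T' ∧ T'.carrier ⊆ Ps}) :
    ∃ Tu Tl : Set WTree,
      Ps = (⋃ T ∈ Tu, T.carrier) ∪ (⋃ T ∈ Tl, T.carrier) ∧
      (∀ T ∈ Tu, IsTree T ∧ UOverlapping T ∧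
        TdMaximalAmong T {T' | IsTree T' ∧ UOverlapping T' ∧
          T'.carrier ⊆ ⋃ T'' ∈ Tu, T''.carrier}) ∧
      ProperlySorted Tl ∧
      (⋃ T ∈ Tu, T.carrier) ∩ (⋃ T ∈ Tl, T.carrier) = ∅ ∧
      (fun T : WTree => (T.ξtop, T.Itop)) '' Tu = (fun T : WTree => (T.ξtop, T.Itop)) '' Tl ∧
      (fun T : WTree => (T.ξtop, T.Itop)) '' Tu ⊆ (fun T : WTree => (T.ξtop, T.Itop)) '' Ts := by
  classical
  have hPsub : ∀ T ∈ Ts, T.carrier ⊆ Ps := by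
    intro T hT P hP; rw [hcover]; exact Set.mem_biUnion hT hP
  have hfull : ∀ T ∈ Ts, T.carrier = {P | P ∈ Ps ∧ P.I ⊆ T.Itop ∧ T.ξtop ∈ P.ω} := by
    intro T hT
    obtain ⟨hTree, -⟩ := htree T hT
    apply Set.Subset.antisymm
    · exact fun P hP => ⟨hPsub T hT hP, hTree.2.2 P hP⟩
    · exact (hmax T hT).2 ⟨{P | P ∈ Ps ∧ P.I ⊆ T.Itop ∧ T.ξtop ∈ P.ω}, T.ξtop, T.Itop⟩
        ⟨⟨hTree.1, hTree.2.1, fun P hP => hP.2⟩, fun P hP => hP.1⟩ rfl rfl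
        (fun P hP => ⟨hPsub T hT hP, hTree.2.2 P hP⟩)
  have hmaxt : ∀ P ∈ Ps, ∃ Q, Q ∈ Ps ∧ Bitile.le P Q ∧ ∀ R ∈ Ps, Bitile.le Q R → R = Q := by
    intro P hP
    have hsfin : {Q | Q ∈ Ps ∧ Bitile.le P Q}.Finite := hfin.subset (fun Q hQ => hQ.1)
    obtain ⟨Q, hQ, hQmax⟩ := Set.Finite.exists_maximalFor (fun Q => volume Q.I)
      {Q | Q ∈ Ps ∧ Bitile.le P Q} hsfin ⟨P, hP, subset_rfl, subset_rfl⟩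
    refine ⟨Q, hQ.1, hQ.2, ?_⟩
    intro R hR hle
    have hRs : R ∈ {Q | Q ∈ Ps ∧ Bitile.le P Q} := ⟨hR, hQ.2.1.trans hle.1, hle.2.trans hQ.2.2⟩
    have hveq := hQmax hRs (measure_mono hle.1)
    have hIeq : Q.I = R.I := dyadic_eq_of_subset Q.hI R.hI hle.1 hveq.ge
    have hvω : volume Q.ω ≤ volume R.ω := vol_omega_le hveq.ge
    exact bitile_ext hIeq.symm (dyadic_eq_of_subset R.hω Q.hω hle.2 hvω)
  have hwit : ∀ P, P ∈ Ps → ∃ T, T ∈ Ts ∧ P ∈ T.carrier := by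
    intro P hP; rw [hcover] at hP; simpa using hP
  haveI : Inhabited WTree := ⟨⟨∅, 0, ∅⟩⟩
  choose! w hw1 hw2 using hwit
  set M : Set Bitile := {P | P ∈ Ps ∧ ∀ R ∈ Ps, Bitile.le P R → R = P} with hMdef
  set D : Set (ℝ × Set ℝ) := (fun P => ((w P).ξtop, (w P).Itop)) '' M with hDdef
  have hDfin : D.Finite := (hfin.subset (fun P hP => hP.1)).image _
  have hDfacts : ∀ d ∈ D, IsDyadic d.2 ∧ 0 ≤ d.1 ∧
      ConvexBitiles {P | P ∈ Ps ∧ P.I ⊆ d.2 ∧ d.1 ∈ P.ω} ∧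
      (∃ R, R ∈ Ps ∧ (∀ S ∈ Ps, Bitile.le R S → S = R) ∧ R.I ⊆ d.2 ∧ d.1 ∈ R.ω) ∧
      (∃ T ∈ Ts, (T.ξtop, T.Itop) = d) := by
    rintro d ⟨Q, ⟨hQPs, hQmax⟩, rfl⟩
    have hT := hw1 Q hQPs
    have hQc := hw2 Q hQPs
    obtain ⟨hTree, hConv⟩ := htree _ hT
    refine ⟨hTree.1, hTree.2.1, ?_, ⟨Q, hQPs, hQmax, (hTree.2.2 Q hQc).1, (hTree.2.2 Q hQc).2⟩,
      ⟨w Q, hT, rfl⟩⟩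
    have hfT := hfull _ hT
    dsimp only
    rw [← hfT]
    exact hConv
  set U : Set Bitile := {P | P ∈ Ps ∧ ∃ d ∈ D, P.I ⊆ d.2 ∧ d.1 ∈ upperHalf P.ω} with hUdef
  set Lt : Set Bitile := {P | P ∈ Ps ∧ P ∉ U} with hLdef
  set cand : Bitile → Set (ℝ × Set ℝ) :=
    fun P => {d | d ∈ D ∧ P.I ⊆ d.2 ∧ d.1 ∈ lowerHalf P.ω} with hcanddef
  have hcandne : ∀ P ∈ Lt, (cand P).Nonempty := by
    intro P hP
    obtain ⟨Q, hQPs, hPQ, hQmax⟩ := hmaxt P hP.1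
    have hT := hw1 Q hQPs
    have hQc := hw2 Q hQPs
    have h1 := (htree _ hT).1.2.2 Q hQc
    have hdD : ((w Q).ξtop, (w Q).Itop) ∈ D := ⟨Q, ⟨hQPs, hQmax⟩, rfl⟩
    have hPI : P.I ⊆ (w Q).Itop := hPQ.1.trans h1.1
    have hωm : (w Q).ξtop ∈ P.ω := hPQ.2 h1.2
    have hnu : (w Q).ξtop ∉ upperHalf P.ω := fun hu => hP.2 ⟨hP.1, _, hdD, hPI, hu⟩
    exact ⟨_, hdD, hPI, (mem_lower_or_upper hωm).resolve_right hnu⟩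
  have hcex : ∀ P ∈ Lt, ∃ d, d ∈ cand P ∧ (∀ e ∈ cand P, e.1 ≤ d.1) ∧
      (∀ e ∈ cand P, e.1 = d.1 → ¬ WellOrderingRel e.2 d.2) := by
    intro P hP
    have hfinc : (cand P).Finite := hDfin.subset (fun e he => he.1)
    obtain ⟨d₀, hd₀, hd₀max⟩ :=
      Set.Finite.exists_maximalFor Prod.fst (cand P) hfinc (hcandne P hP)
    have hmax1 : ∀ e ∈ cand P, e.1 ≤ d₀.1 := by
      intro e he
      by_contra hlt
      push_neg at hlt
      exact absurd (hd₀max he hlt.le) (not_le.mpr hlt)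
    have wf : WellFounded (WellOrderingRel (α := Set ℝ)) := IsWellFounded.wf
    have hSne : (Prod.snd '' {e | e ∈ cand P ∧ e.1 = d₀.1}).Nonempty := ⟨d₀.2, d₀, ⟨hd₀, rfl⟩, rfl⟩
    obtain ⟨e, ⟨heC, he1⟩, he2⟩ := wf.min_mem _ hSne
    refine ⟨e, heC, fun f hf => by rw [he1]; exact hmax1 f hf, ?_⟩
    intro f hf hfe
    have hfS : f.2 ∈ Prod.snd '' {e | e ∈ cand P ∧ e.1 = d₀.1} := ⟨f, ⟨hf, hfe.trans he1⟩, rfl⟩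
    have h := wf.not_lt_min _ hfS
    rw [← he2] at h
    exact h
  choose! c hc1 hc2 hc3 using hcex
  have hcc : ∀ P ∈ Lt, ∀ P' ∈ Lt, c P ∈ cand P' → c P' ∈ cand P → c P = c P' := by
    intro P hP P' hP' h1 h2
    have e1 : (c P).1 ≤ (c P').1 := hc2 P' hP' _ h1
    have e2 : (c P').1 ≤ (c P).1 := hc2 P hP _ h2
    have he : (c P').1 = (c P).1 := le_antisymm e2 e1
    have t1 := hc3 P hP _ h2 he
    have t2 := hc3 P' hP' _ h1 he.symm
    rcases trichotomous_of WellOrderingRel (c P).2 (c P').2 with h | h | h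
    · exact absurd h t2
    · exact Prod.ext he.symm h
    · exact absurd h t1
  have hUu : (⋃ T ∈ fuT Ps '' D, T.carrier) = U := by
    apply Set.Subset.antisymm
    · intro P hP
      simp only [Set.mem_iUnion, exists_prop] at hP
      obtain ⟨T, ⟨d, hd, rfl⟩, hPT⟩ := hP
      exact ⟨hPT.1, d, hd, hPT.2⟩
    · intro P hP
      obtain ⟨hPs, d, hd, h1, h2⟩ := hP
      exact Set.mem_biUnion ⟨d, hd, rfl⟩ (⟨hPs, h1, h2⟩ : P ∈ (fuT Ps d).carrier)
  have hLu : (⋃ T ∈ flT Lt c '' D, T.carrier) = Lt := by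
    apply Set.Subset.antisymm
    · intro P hP
      simp only [Set.mem_iUnion, exists_prop] at hP
      obtain ⟨T, ⟨d, hd, rfl⟩, hPT⟩ := hP
      exact hPT.1
    · intro P hP
      exact Set.mem_biUnion ⟨c P, (hc1 P hP).1, rfl⟩ (⟨hP, rfl⟩ : P ∈ (flT Lt c (c P)).carrier)
  refine ⟨fuT Ps '' D, flT Lt c '' D, ?_, ?_, ?_, ?_, ?_, ?_⟩
  · rw [hUu, hLu]
    apply Set.Subset.antisymm
    · intro P hP
      by_cases h : P ∈ U
      · exact Or.inl h
      · exact Or.inr ⟨hP, h⟩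
    · rintro P (h | h)
      · exact h.1
      · exact h.1
  · rintro T ⟨d, hdD, rfl⟩
    obtain ⟨hdy, hpos, -, -, -⟩ := hDfacts d hdD
    have hIsT : IsTree (fuT Ps d) :=
      ⟨hdy, hpos, fun P hP => ⟨hP.2.1, upperHalf_subset _ hP.2.2⟩⟩
    have hUO : UOverlapping (fuT Ps d) := fun P hP => hP.2.2
    refine ⟨hIsT, hUO, ⟨hIsT, hUO, ?_⟩, ?_⟩
    · rw [hUu]
      exact fun P hP => ⟨hP.1, d, hdD, hP.2⟩
    · intro T' hT' hξ hI _
      rw [hUu] at hT'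
      intro P hP
      have h1 := hT'.1.2.2 P hP
      have h2 := hT'.2.1 P hP
      have h3 := hT'.2.2 hP
      have hI' : T'.Itop = d.2 := hI
      have hξ' : T'.ξtop = d.1 := hξ
      exact ⟨h3.1, hI' ▸ h1.1, hξ' ▸ h2⟩
  · refine ⟨?_, ?_, ?_⟩
    · rintro T ⟨d, hdD, rfl⟩
      obtain ⟨hdy, hpos, hconv, -, -⟩ := hDfacts d hdD
      have hlow : ∀ P, P ∈ (flT Lt c d).carrier → P.I ⊆ d.2 ∧ d.1 ∈ lowerHalf P.ω := by
        intro P hP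
        have h := hc1 P hP.1
        rw [hP.2] at h
        exact ⟨h.2.1, h.2.2⟩
      refine ⟨⟨hdy, hpos, fun P hP => ⟨(hlow P hP).1, lowerHalf_subset _ (hlow P hP).2⟩⟩,
        fun P hP => (hlow P hP).2, ?_⟩
      intro P P' P'' hP hP'' h1 h2
      have hPL : P ∈ Lt := hP.1
      have hP''L : P'' ∈ Lt := hP''.1
      have hdP : d ∈ cand P := by rw [← hP.2]; exact hc1 P hPL
      have hdP'' : d ∈ cand P'' := by rw [← hP''.2]; exact hc1 P'' hP''L
      have le1 : Bitile.le P P' := lowerLE_le h1.1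
      have le2 : Bitile.le P' P'' := lowerLE_le h2.1
      have hP'F : P' ∈ Ps ∧ P'.I ⊆ d.2 ∧ d.1 ∈ P'.ω :=
        hconv P P' P'' ⟨hPL.1, hdP.2.1, lowerHalf_subset _ hdP.2.2⟩
          ⟨hP''L.1, hdP''.2.1, lowerHalf_subset _ hdP''.2.2⟩ le1 le2
      have hlow' : d.1 ∈ lowerHalf P'.ω := h2.1.2 hdP''.2.2
      have hdP' : d ∈ cand P' := ⟨hdP.1, hP'F.2.1, hlow'⟩
      have hP'U : P' ∉ U := by
        intro hU'
        obtain ⟨-, d'', hd''D, hsubI, hup⟩ := id hU'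
        by_cases hωeq : P'.ω = P.ω
        · have hω := enn_aux (a := volume P.ω) (by rw [mul_comm]; exact P.harea)
          have hvol : volume P.I = volume P'.I := by
            refine le_antisymm ?_ ?_
            · refine (ENNReal.mul_le_mul_iff_left hω.1 hω.2).mp ?_
              rw [P.harea]
              rw [show volume P.ω = volume P'.ω from hωeq ▸ rfl]
              rw [P'.harea]
            · refine (ENNReal.mul_le_mul_iff_left hω.1 hω.2).mp ?_
              rw [P.harea]
              rw [show volume P.ω = volume P'.ω from hωeq ▸ rfl]
              rw [P'.harea]
          have hIeq : P.I = P'.I := dyadic_eq_of_subset P.hI P'.hI le1.1 hvol.ge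
          have hPP' : P = P' := bitile_ext hIeq hωeq.symm
          exact hPL.2 (hPP' ▸ hU')
        · have hsubω : P'.ω ⊆ lowerHalf P.ω :=
            dyadic_subset_lowerHalf P.hω P'.hω le1.2 hωeq hP'F.2.2 hdP.2.2
          have hd''cand : d'' ∈ cand P :=
            ⟨hd''D, le1.1.trans hsubI, hsubω (upperHalf_subset _ hup)⟩
          have hle := hc2 P hPL d'' hd''cand
          rw [hP.2] at hle
          exact absurd (lower_lt_upper hlow' hup) (not_lt.mpr hle)
      have hP'L : P' ∈ Lt := ⟨hP'F.1, hP'U⟩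
      have hcP' : c P' ∈ cand P := by
        have h := hc1 P' hP'L
        exact ⟨h.1, le1.1.trans h.2.1, h1.1.2 h.2.2⟩
      have hceq : c P = c P' := hcc P hPL P' hP'L (by rw [hP.2]; exact hdP') hcP'
      exact ⟨hP'L, hceq.symm.trans hP.2⟩
    · rintro T ⟨d, hdD, rfl⟩ T' ⟨d', hd'D, rfl⟩ hne
      rw [Set.eq_empty_iff_forall_notMem]
      rintro P ⟨hP1, hP2⟩
      have hdd : d = d' := hP1.2.symm.trans hP2.2
      exact hne (by rw [hdd])
    · rintro T ⟨d, hdD, rfl⟩ P hP T' ⟨d', hd'D, rfl⟩ hint hup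
      have hPL : P ∈ Lt := hP.1
      by_cases hPI : P.I ⊆ d'.2
      · exact hPL.2 ⟨hPL.1, d', hd'D, hPI, hup⟩
      · obtain ⟨hdy', -, -, ⟨R, hRPs, hRmax, hRI, hRω⟩, -⟩ := hDfacts d' hd'D
        have hsub : d'.2 ⊆ P.I := (dyadic_nested hdy' P.hI hint).resolve_right hPI
        have hne' : d'.2 ≠ P.I := fun h => hPI (h ▸ subset_rfl)
        have hvlt : volume d'.2 < volume P.I := dyadic_vol_lt hdy' P.hI hsub hne'
        have hvR : volume R.I < volume P.I := lt_of_le_of_lt (measure_mono hRI) hvlt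
        have hvω : volume P.ω < volume R.ω := vol_omega_lt hvR
        have hPω : P.ω ⊆ R.ω := by
          rcases dyadic_nested R.hω P.hω ⟨d'.1, hRω, upperHalf_subset _ hup⟩ with h | h
          · exact absurd (measure_mono h) (not_le.mpr hvω)
          · exact h
        have hPR : P = R := hRmax P hPL.1 ⟨hRI.trans hsub, hPω⟩
        rw [hPR] at hvR
        exact absurd hvR (lt_irrefl _)
  · rw [hUu, hLu]
    rw [Set.eq_empty_iff_forall_notMem]
    rintro P ⟨h1, h2⟩
    exact h2.2 h1
  · apply Set.Subset.antisymm
    · rintro p ⟨T, ⟨d, hdD, rfl⟩, rfl⟩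
      exact ⟨flT Lt c d, ⟨d, hdD, rfl⟩, rfl⟩
    · rintro p ⟨T, ⟨d, hdD, rfl⟩, rfl⟩
      exact ⟨fuT Ps d, ⟨d, hdD, rfl⟩, rfl⟩
  · rintro p ⟨T, ⟨d, hdD, rfl⟩, rfl⟩
    obtain ⟨-, -, -, -, T', hT', htop⟩ := hDfacts d hdD
    exact ⟨T', hT', htop⟩


end
end
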